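/- Let R_r, R_s, L_r, L_s, L_l > 0 be real constants and ω_g, ω_s : ℝ → ℝ. Let δφ_r, δφ_s, δu_s : ℝ → ℂ with δφ_r, δφ_s differentiable, and for each t let A_r(t), A_s(t) : ℝ² → ℝ² be positive semidefinite linear maps (identifying ℂ with ℝ²). Define δi_r(t) := A_r(t) δφ_r(t) + (1/L_r + 1/L_l) δφ_r(t) − (1/L_l) δφ_s(t) and δi_s(t) := A_s(t) δφ_s(t) + (1/L_s + 1/L_l) δφ_s(t) − (1/L_l) δφ_r(t), and assume δφ_r'(t) = −i ω_g(t) δφ_r(t) − R_r δi_r(t) and δφ_s'(t) = −i ω_s(t) δφ_s(t) − R_s δi_s(t) + δu_s(t) for all t. Then V(t) := |δφ_r(t)|²/(2 R_r) + |δφ_s(t)|²/(2 R_s) satisfies, for all t: V'(t) ≤ −(1/L_r) |δφ_r(t)|² − (1/L_s) |δφ_s(t)|² + (1/R_s) Re(conj(δφ_s(t)) δu_s(t)). -/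

import Mathlib

open Complex

/-! Differentiating the storage, the rotation terms `-i ω δφ` drop out because they are
orthogonal to `δφ`, so `V' = -Re⟨δφ_r, δi_r⟩ - Re⟨δφ_s, δi_s⟩ + Re⟨δφ_s, δu_s⟩ / R_s`.
Inserting the flux–current relations, the supplied power splits into the saturation terms
`Re⟨δφ, A δφ⟩ ≥ 0`, the magnetising terms `|δφ_r|²/L_r + |δφ_s|²/L_s`, and the leakage
term `|δφ_r - δφ_s|²/L_l ≥ 0`; dropping the nonnegative ones gives the inequality. -/

lemma re_conj_mul_I_mul_ofReal_mul_self (z : ℂ) (ω : ℝ) :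
    (starRingEnd ℂ z * (I * ω * z)).re = 0 := by
  simp only [mul_re, mul_im, conj_re, conj_im, I_re, I_im, ofReal_re, ofReal_im]
  ring

theorem HasDerivAt.norm_sq_div_of_rotating {f : ℝ → ℂ} {ω : ℝ} {w : ℂ} {t : ℝ} (R : ℝ)
    (hf : HasDerivAt f (-(I * ω) * f t + w) t) :
    HasDerivAt (fun τ => ‖f τ‖ ^ 2 / (2 * R)) ((starRingEnd ℂ (f t) * w).re / R) t := by
  refine (hf.norm_sq.div_const (2 * R)).congr_deriv ?_
  have hrot := re_conj_mul_I_mul_ofReal_mul_self (f t) ω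
  have hsplit : starRingEnd ℂ (f t) * (-(I * ω) * f t + w)
      = -(starRingEnd ℂ (f t) * (I * ω * f t)) + starRingEnd ℂ (f t) * w := by ring
  rw [Complex.inner, mul_comm _ (starRingEnd ℂ (f t)), hsplit, add_re, neg_re, hrot]
  ring

lemma re_conj_mul_add_re_conj_mul_of_coupling (a b : ℂ) (k_r k_s k_l : ℝ) :
    (starRingEnd ℂ a * ((k_r + k_l) • a - k_l • b)).re
        + (starRingEnd ℂ b * ((k_s + k_l) • b - k_l • a)).re
      = k_r * ‖a‖ ^ 2 + k_s * ‖b‖ ^ 2 + k_l * ‖a - b‖ ^ 2 := by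
  simp only [Complex.sq_norm, normSq_apply, real_smul, mul_re, mul_im, sub_re, sub_im,
    conj_re, conj_im, ofReal_re, ofReal_im]
  ring

theorem stmt_9_general (R_r R_s L_r L_s L_l : ℝ)
    (hR_r : 0 < R_r) (hR_s : 0 < R_s) (hL_l : 0 < L_l)
    (ω_g ω_s : ℝ → ℝ) (δφ_r δφ_s δu_s : ℝ → ℂ)
    (A_r A_s : ℝ → (ℂ →ₗ[ℝ] ℂ))
    (hA_r : ∀ (t : ℝ) (z : ℂ), 0 ≤ ((starRingEnd ℂ) z * A_r t z).re)
    (hA_s : ∀ (t : ℝ) (z : ℂ), 0 ≤ ((starRingEnd ℂ) z * A_s t z).re)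
    (δi_r δi_s : ℝ → ℂ)
    (hi_r : ∀ t : ℝ, δi_r t =
      A_r t (δφ_r t) + (1 / L_r + 1 / L_l) • δφ_r t - (1 / L_l) • δφ_s t)
    (hi_s : ∀ t : ℝ, δi_s t =
      A_s t (δφ_s t) + (1 / L_s + 1 / L_l) • δφ_s t - (1 / L_l) • δφ_r t)
    (hr : ∀ t : ℝ, HasDerivAt δφ_r
      (-(Complex.I * (ω_g t : ℂ)) * δφ_r t - (R_r : ℂ) * δi_r t) t)
    (hs : ∀ t : ℝ, HasDerivAt δφ_s
      (-(Complex.I * (ω_s t : ℂ)) * δφ_s t - (R_s : ℂ) * δi_s t + δu_s t) t)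
    (V : ℝ → ℝ)
    (hV : ∀ t : ℝ, V t = ‖δφ_r t‖ ^ 2 / (2 * R_r) + ‖δφ_s t‖ ^ 2 / (2 * R_s)) :
    ∀ t : ℝ, deriv V t ≤ -(1 / L_r) * ‖δφ_r t‖ ^ 2 - (1 / L_s) * ‖δφ_s t‖ ^ 2
      + (1 / R_s) * ((starRingEnd ℂ) (δφ_s t) * δu_s t).re := by
  intro t
  have hderiv : HasDerivAt V
      (-(starRingEnd ℂ (δφ_r t) * δi_r t).re - (starRingEnd ℂ (δφ_s t) * δi_s t).re
        + 1 / R_s * (starRingEnd ℂ (δφ_s t) * δu_s t).re) t := by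
    rw [show V = _ from funext hV]
    have hr' := (hr t).congr_deriv (by rw [sub_eq_add_neg])
    have hs' := (hs t).congr_deriv (by rw [sub_eq_add_neg, add_assoc])
    refine ((hr'.norm_sq_div_of_rotating R_r).add
      (hs'.norm_sq_div_of_rotating R_s)).congr_deriv ?_
    simp only [mul_add, mul_neg, mul_left_comm _ (R_r : ℂ), mul_left_comm _ (R_s : ℂ),
      add_re, neg_re, re_ofReal_mul]
    field_simp
    ring
  have hpower := re_conj_mul_add_re_conj_mul_of_coupling (δφ_r t) (δφ_s t) (1 / L_r) (1 / L_s)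
    (1 / L_l)
  have hleak : 0 ≤ 1 / L_l * ‖δφ_r t - δφ_s t‖ ^ 2 := by positivity
  have hsat_r := hA_r t (δφ_r t)
  have hsat_s := hA_s t (δφ_s t)
  rw [hderiv.deriv, hi_r, hi_s]
  simp only [add_sub_assoc, mul_add, add_re]
  linarith

/-- Strict uniform differential passivity, from `δu_s` to `δφ_s`, of the virtual flux
system of the saturated induction motor: combining the displacement flux dynamics with
the displacement flux–current relations (with positive semidefinite saturation
Jacobians `A_r(t)`, `A_s(t)`), the storage `V = |δφ_r|²/(2R_r) + |δφ_s|²/(2R_s)`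
satisfies the stated strict dissipation inequality. -/
theorem stmt_9 (R_r R_s L_r L_s L_l : ℝ)
    (hR_r : 0 < R_r) (hR_s : 0 < R_s) (hL_r : 0 < L_r) (hL_s : 0 < L_s) (hL_l : 0 < L_l)
    (ω_g ω_s : ℝ → ℝ) (δφ_r δφ_s δu_s : ℝ → ℂ)
    (A_r A_s : ℝ → (ℂ →ₗ[ℝ] ℂ))
    (hA_r : ∀ (t : ℝ) (z : ℂ), 0 ≤ ((starRingEnd ℂ) z * A_r t z).re)
    (hA_s : ∀ (t : ℝ) (z : ℂ), 0 ≤ ((starRingEnd ℂ) z * A_s t z).re)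
    (δi_r δi_s : ℝ → ℂ)
    (hi_r : ∀ t : ℝ, δi_r t =
      A_r t (δφ_r t) + (1 / L_r + 1 / L_l) • δφ_r t - (1 / L_l) • δφ_s t)
    (hi_s : ∀ t : ℝ, δi_s t =
      A_s t (δφ_s t) + (1 / L_s + 1 / L_l) • δφ_s t - (1 / L_l) • δφ_r t)
    (hr : ∀ t : ℝ, HasDerivAt δφ_r
      (-(Complex.I * (ω_g t : ℂ)) * δφ_r t - (R_r : ℂ) * δi_r t) t)
    (hs : ∀ t : ℝ, HasDerivAt δφ_s
      (-(Complex.I * (ω_s t : ℂ)) * δφ_s t - (R_s : ℂ) * δi_s t + δu_s t) t)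
    (V : ℝ → ℝ)
    (hV : ∀ t : ℝ, V t = ‖δφ_r t‖ ^ 2 / (2 * R_r) + ‖δφ_s t‖ ^ 2 / (2 * R_s)) :
    ∀ t : ℝ, deriv V t ≤ -(1 / L_r) * ‖δφ_r t‖ ^ 2 - (1 / L_s) * ‖δφ_s t‖ ^ 2
      + (1 / R_s) * ((starRingEnd ℂ) (δφ_s t) * δu_s t).re :=
  stmt_9_general R_r R_s L_r L_s L_l hR_r hR_s hL_l ω_g ω_s δφ_r δφ_s δu_s A_r A_s hA_r hA_s δi_r
    δi_s hi_r hi_s hr hs V hV
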